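/- arXiv:1010.6216 — 2 statements merged into one kernel-verified Lean document; each statement's English description precedes it below -/
import Mathlib

section
/- Assume Schanuel's conjecture. If r > e^e is a natural number with r ≠ 16 (or more generally r satisfies the hypotheses of Proposition 1.4), and 0 < s < t are real numbers with s^t = t^s = r, then both s and t are transcendental. -/
/-!
Write `a = log s`, `b = log t`, `c = log r`, so that `t a = s b = c`.

If `s` is algebraic but `t` is not, then `a, b, c` are `ℚ`-linearly independent, while
`a, b, c, s, t, r` are all algebraic over `ℚ(b, t)`; this contradicts Schanuel's conjecture,
which asks for transcendence degree at least `3`. Symmetrically when only `t` is algebraic.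

If both are algebraic, then `a, c, s, r` are algebraic over `ℚ(a)`, so Schanuel's conjecture
forces `a, c` to be linearly dependent and `t = c / a` is rational; likewise `s` is rational.
Then `s, t` are integers with `s ^ t = t ^ s`, so `(s, t) = (2, 4)` and `r = 16`.
-/

open Real

def SchanuelConjecture : Prop :=
  ∀ (n : ℕ) (α : Fin n → ℂ), LinearIndependent ℚ α →
    ∃ g : Fin n → ℂ,
      (∀ i, g i ∈ Set.range α ∪ Set.range (fun i => Complex.exp (α i))) ∧
      AlgebraicIndependent ℚ g

theorem AlgebraicIndependent.card_le_card_of_isAlgebraic_adjoin {K A ι : Type*} [Field K]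
    [CommRing A] [IsDomain A] [Algebra K A] [Fintype ι] {x : ι → A}
    (hx : AlgebraicIndependent K x) (s : Finset A)
    (hs : ∀ i, IsAlgebraic (Algebra.adjoin K (s : Set A)) (x i)) :
    Fintype.card ι ≤ s.card := by
  set M := AlgebraicIndependent.matroid K A
  have hcl : Set.range x ⊆ M.closure s := by
    rintro _ ⟨i, rfl⟩
    rw [AlgebraicIndependent.matroid_closure_eq]
    exact hs i
  have : (Fintype.card ι : ℕ∞) ≤ s.card := calc
    _ = ENat.card ι := ENat.card_eq_coe_fintype_card.symm
    _ ≤ (Set.range x).encard := hx.injective.encard_range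
    _ ≤ M.eRk (M.closure s) :=
      (AlgebraicIndependent.matroid_indep_iff.mpr hx.to_subtype_range).encard_le_eRk_of_subset hcl
    _ = M.eRk s := M.eRk_closure_eq _
    _ ≤ (s : Set A).encard := M.eRk_le_encard _
    _ = s.card := Set.encard_coe_eq_coe_finsetCard s
  exact_mod_cast this

theorem subset_algebraicClosure_adjoin {K E : Type*} [Field K] [Field E] [Algebra K E]
    (s : Set E) : s ⊆ algebraicClosure (IntermediateField.adjoin K s) E := fun z hz =>
  (algebraicClosure _ E).algebraMap_mem
    (⟨z, IntermediateField.subset_adjoin K s hz⟩ : IntermediateField.adjoin K s)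

theorem Complex.ofReal_mem_algebraicClosure {x : ℝ} (hx : IsAlgebraic ℚ x)
    (F : IntermediateField ℚ ℂ) : (x : ℂ) ∈ algebraicClosure F ℂ :=
  mem_algebraicClosure_iff.mpr ((hx.algebraMap (A := ℂ)).tower_top F)

theorem LinearIndependent.complex_ofReal {ι : Type*} {v : ι → ℝ}
    (hv : LinearIndependent ℚ v) : LinearIndependent ℚ (fun i => (v i : ℂ)) :=
  hv.map' (Complex.ofRealAm.toLinearMap.restrictScalars ℚ)
    (LinearMap.ker_eq_bot.mpr Complex.ofReal_injective)

theorem Real.rpow_ratCast_pow_den {y : ℝ} (hy : 0 ≤ y) {q : ℚ} (hq : 0 < q) :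
    (y ^ (q : ℝ)) ^ q.den = y ^ q.num.natAbs := by
  rw [← rpow_natCast, ← rpow_mul hy, ← rpow_natCast, Nat.cast_natAbs,
    abs_of_nonneg (Rat.num_nonneg.mpr hq.le)]
  congr 1
  exact_mod_cast Rat.mul_den_eq_num q

theorem IsAlgebraic.of_rpow_ratCast {y : ℝ} (hy : 0 ≤ y) {q : ℚ} (hq : 0 < q)
    (h : IsAlgebraic ℚ (y ^ (q : ℝ))) : IsAlgebraic ℚ y := by
  have := h.pow q.den
  rw [rpow_ratCast_pow_den hy hq] at this
  exact this.of_pow (Int.natAbs_pos.mpr (Rat.num_pos.mpr hq).ne')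

theorem Rat.exists_nat_eq_of_rpow_eq_natCast {p q : ℚ} (hp : 0 < p) (hq : 0 < q) {k : ℕ}
    (h : (p : ℝ) ^ (q : ℝ) = k) : ∃ m : ℕ, p = m := by
  have hpow : p ^ q.num.natAbs = (k : ℚ) ^ q.den := by
    have := rpow_ratCast_pow_den (p.cast_nonneg.mpr hp.le) hq
    rw [h] at this
    exact_mod_cast this.symm
  have hden : p.den ^ q.num.natAbs = 1 := by
    simpa [Rat.den_pow] using congrArg Rat.den hpow
  have hp1 : p.den = 1 :=
    (Nat.pow_eq_one.mp hden).resolve_right (Int.natAbs_pos.mpr (Rat.num_pos.mpr hq).ne').ne'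
  obtain ⟨m, hm⟩ := Int.eq_ofNat_of_zero_le (Rat.num_nonneg.mpr hp.le)
  exact ⟨m, by rw [← Rat.coe_int_num_of_den_eq_one hp1, hm, Int.cast_natCast]⟩

theorem Nat.eq_two_four_of_pow_eq_pow {m n : ℕ} (hm : 0 < m) (hmn : m < n) (h : m ^ n = n ^ m) :
    m = 2 ∧ n = 4 := by
  -- `m ^ m ∣ n ^ m` gives `m ∣ n`; for `n = m k` the equation becomes `m ^ k = m k`.
  have hdvd : m ∣ n := (Nat.pow_dvd_pow_iff hm.ne').mp (h ▸ pow_dvd_pow m hmn.le)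
  obtain ⟨k, rfl⟩ := hdvd
  have hk : m ^ k = m * k := by
    refine Nat.pow_left_injective hm.ne' (show (m ^ k) ^ m = (m * k) ^ m from ?_)
    rw [← pow_mul, mul_comm k m, h, mul_pow]
  have hk1 : 1 < k := Nat.lt_of_mul_lt_mul_left (a := m) (by simpa using hmn)
  obtain ⟨j, rfl⟩ : ∃ j, k = j + 2 := ⟨k - 2, by omega⟩
  have hm2 : 2 ≤ m := by
    by_contra! hm2
    obtain rfl : m = 1 := by omega
    simp at hk
  have hj : m ^ (j + 1) = j + 2 := Nat.eq_of_mul_eq_mul_left hm (by rwa [← pow_succ'])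
  have h2j : 2 * 2 ^ j ≤ j + 2 := by
    rw [← pow_succ', ← hj]
    exact Nat.pow_le_pow_left hm2 _
  obtain rfl : j = 0 := by linarith [j.lt_two_pow_self]
  simp only [zero_add, pow_one] at hj
  omega

theorem eq_sixteen_of_rat_rpow_eq_rpow {p q : ℚ} (hp : 0 < p) (hpq : p < q) {r : ℕ}
    (h1 : (p : ℝ) ^ (q : ℝ) = r) (h2 : (q : ℝ) ^ (p : ℝ) = r) : r = 16 := by
  obtain ⟨m, rfl⟩ := Rat.exists_nat_eq_of_rpow_eq_natCast hp (hp.trans hpq) h1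
  obtain ⟨n, rfl⟩ := Rat.exists_nat_eq_of_rpow_eq_natCast (hp.trans hpq) hp h2
  simp only [Rat.cast_natCast, rpow_natCast] at h1 h2
  have h1 : m ^ n = r := by exact_mod_cast h1
  have h2 : n ^ m = r := by exact_mod_cast h2
  obtain ⟨rfl, rfl⟩ :=
    Nat.eq_two_four_of_pow_eq_pow (by exact_mod_cast hp) (by exact_mod_cast hpq) (h1.trans h2.symm)
  omega

theorem linearIndependent_log_of_rpow_eq_rpow {x y : ℝ} (hx : 0 < x) (hy : 0 < y) (hx1 : x ≠ 1)
    (hxa : IsAlgebraic ℚ x) (hya : Transcendental ℚ y) (hxy : x ^ y = y ^ x)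
    (hza : IsAlgebraic ℚ (x ^ y)) : LinearIndependent ℚ ![log x, log y, log (x ^ y)] := by
  have hlogzx : log (x ^ y) = y * log x := log_rpow hx y
  have hlogzy : log (x ^ y) = x * log y := by rw [hxy, log_rpow hy]
  have hlogz : log (x ^ y) ≠ 0 := by
    rw [hlogzx]
    exact mul_ne_zero hy.ne' (log_ne_zero_of_pos_of_ne_one hx hx1)
  rw [Fintype.linearIndependent_iff]
  intro c hc
  simp only [Fin.sum_univ_three, Matrix.cons_val, Rat.smul_def] at hc
  -- Multiply the relation by `x y` and use `y log x = x log y = log (x ^ y) ≠ 0`.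
  have hrel : (c 0 : ℝ) * x + c 1 * y + c 2 * x * y = 0 := by
    refine (mul_eq_zero.mp ?_).resolve_right hlogz
    linear_combination x * y * hc + c 0 * x * hlogzx + c 1 * y * hlogzy
  set K := algebraicClosure ℚ ℝ
  have hxK : x ∈ K := mem_algebraicClosure_iff.mpr hxa
  have hK : ∀ a : ℚ, (a : ℝ) ∈ K := SubfieldClass.ratCast_mem K
  have hden : (c 1 : ℝ) + c 2 * x = 0 := by
    by_contra hden
    apply hya
    rw [show y = -(c 0 * x) / (c 1 + c 2 * x) by rw [eq_div_iff hden]; linear_combination hrel]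
    exact mem_algebraicClosure_iff.mp <|
      div_mem (neg_mem (mul_mem (hK _) hxK)) (add_mem (hK _) (mul_mem (hK _) hxK))
  have hc0 : c 0 = 0 := by
    have : (c 0 : ℝ) * x = 0 := by linear_combination hrel - y * hden
    exact_mod_cast (mul_eq_zero.mp this).resolve_right hx.ne'
  have hc2 : c 2 = 0 := by
    by_contra hc2
    apply hya
    have hxq : x = ((-c 1 / c 2 : ℚ) : ℝ) := by
      push_cast
      field_simp
      linear_combination hden
    refine IsAlgebraic.of_rpow_ratCast hy.le (q := -c 1 / c 2) (by exact_mod_cast hxq ▸ hx) ?_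
    rwa [← hxq, ← hxy]
  have hc1 : c 1 = 0 := by
    rw [hc2] at hden
    exact_mod_cast (by simpa using hden : (c 1 : ℝ) = 0)
  intro i
  fin_cases i <;> assumption

theorem SchanuelConjecture.le_card_of_mem_algebraicClosure (hS : SchanuelConjecture) {n : ℕ}
    {α : Fin n → ℝ} (hα : LinearIndependent ℚ α) (s : Finset ℂ)
    (hs : ∀ i,
      (α i : ℂ) ∈ algebraicClosure (IntermediateField.adjoin ℚ (s : Set ℂ)) ℂ ∧
        (exp (α i) : ℂ) ∈ algebraicClosure (IntermediateField.adjoin ℚ (s : Set ℂ)) ℂ) :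
    n ≤ s.card := by
  obtain ⟨g, hg, hind⟩ := hS n _ hα.complex_ofReal
  refine Fintype.card_fin n ▸ hind.card_le_card_of_isAlgebraic_adjoin s fun i => ?_
  rw [← IntermediateField.isAlgebraic_adjoin_iff, ← mem_algebraicClosure_iff]
  rcases hg i with ⟨j, hj⟩ | ⟨j, hj⟩ <;> rw [← hj]
  · exact (hs j).1
  · simpa using (hs j).2

theorem SchanuelConjecture.exists_rat_eq_of_isAlgebraic_rpow (hS : SchanuelConjecture)
    {x y : ℝ} (hx : 0 < x) (hx1 : x ≠ 1) (hxa : IsAlgebraic ℚ x) (hya : IsAlgebraic ℚ y)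
    (hza : IsAlgebraic ℚ (x ^ y)) : ∃ q : ℚ, y = q := by
  have hlogx : log x ≠ 0 := log_ne_zero_of_pos_of_ne_one hx hx1
  have hlogz : log (x ^ y) = y * log x := log_rpow hx y
  have hdep : ¬ LinearIndependent ℚ ![log x, log (x ^ y)] := by
    intro hli
    set L := algebraicClosure (IntermediateField.adjoin ℚ
      (({(log x : ℂ)} : Finset ℂ) : Set ℂ)) ℂ
    have hlogxL : (log x : ℂ) ∈ L := subset_algebraicClosure_adjoin _ (by simp)
    have := hS.le_card_of_mem_algebraicClosure hli {(log x : ℂ)} <| by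
      simp only [Fin.forall_fin_two, Matrix.cons_val_zero, Matrix.cons_val_one, exp_log hx,
        exp_log (rpow_pos_of_pos hx y)]
      rw [hlogz]
      push_cast
      exact ⟨⟨hlogxL, Complex.ofReal_mem_algebraicClosure hxa _⟩,
        mul_mem (Complex.ofReal_mem_algebraicClosure hya _) hlogxL,
        Complex.ofReal_mem_algebraicClosure hza _⟩
    simp at this
  obtain ⟨a, b, hab, hne⟩ :
      ∃ a b : ℚ, a • log x + b • log (x ^ y) = 0 ∧ (a = 0 → b ≠ 0) := by
    simpa [LinearIndependent.pair_iff] using hdep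
  rw [Rat.smul_def, Rat.smul_def, hlogz] at hab
  have hy : (a : ℝ) + b * y = 0 := by
    refine (mul_eq_zero.mp ?_).resolve_right hlogx
    linear_combination hab
  have hb : b ≠ 0 := by
    rintro rfl
    exact hne (by simpa using hy) rfl
  exact ⟨-a / b, by push_cast; field_simp; linarith⟩

theorem SchanuelConjecture.isAlgebraic_of_rpow_eq_rpow (hS : SchanuelConjecture) {x y : ℝ}
    (hx : 0 < x) (hy : 0 < y) (hx1 : x ≠ 1) (hxa : IsAlgebraic ℚ x) (hxy : x ^ y = y ^ x)
    (hza : IsAlgebraic ℚ (x ^ y)) : IsAlgebraic ℚ y := by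
  by_contra hya
  have hli := linearIndependent_log_of_rpow_eq_rpow hx hy hx1 hxa hya hxy hza
  set L := algebraicClosure (IntermediateField.adjoin ℚ
    (({(log y : ℂ), (y : ℂ)} : Finset ℂ) : Set ℂ)) ℂ
  have hlogyL : (log y : ℂ) ∈ L := subset_algebraicClosure_adjoin _ (by simp)
  have hyL : (y : ℂ) ∈ L := subset_algebraicClosure_adjoin _ (by simp)
  have hxL : (x : ℂ) ∈ L := Complex.ofReal_mem_algebraicClosure hxa _
  have hlogzy : log (x ^ y) = x * log y := by rw [hxy, log_rpow hy]
  have hlogx : log x = x * log y / y := by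
    rw [eq_div_iff hy.ne', ← hlogzy, log_rpow hx, mul_comm]
  have := hS.le_card_of_mem_algebraicClosure hli {(log y : ℂ), (y : ℂ)} <| by
    simp only [Fin.forall_fin_succ, IsEmpty.forall_iff, Fin.succ_zero_eq_one, Fin.succ_one_eq_two,
      Matrix.cons_val, exp_log hx, exp_log hy, exp_log (rpow_pos_of_pos hx y), and_true]
    refine ⟨⟨?_, hxL⟩, ⟨hlogyL, hyL⟩, ?_, Complex.ofReal_mem_algebraicClosure hza _⟩
    · rw [hlogx]
      push_cast
      exact div_mem (mul_mem hxL hlogyL) hyL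
    · rw [hlogzy]
      push_cast
      exact mul_mem hxL hlogyL
  exact absurd (this.trans Finset.card_le_two) (by norm_num)

theorem both_transcendental_general (hS : SchanuelConjecture)
    (r : ℕ) (hr16 : r ≠ 16)
    (s t : ℝ) (hs : 0 < s) (hst : s < t)
    (h1 : s ^ t = (r : ℝ)) (h2 : t ^ s = (r : ℝ)) :
    Transcendental ℚ s ∧ Transcendental ℚ t := by
  have ht : 0 < t := hs.trans hst
  have hs1 : s ≠ 1 := by
    rintro rfl
    rw [one_rpow, eq_comm, ← h2, rpow_one] at h1
    exact hst.ne h1.symm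
  have ht1 : t ≠ 1 := by
    rintro rfl
    rw [one_rpow, eq_comm, ← h1, rpow_one] at h2
    exact hst.ne h2
  have hra : IsAlgebraic ℚ (r : ℝ) := isAlgebraic_natCast r
  have hs_to_t : IsAlgebraic ℚ s → IsAlgebraic ℚ t := fun hsa =>
    hS.isAlgebraic_of_rpow_eq_rpow hs ht hs1 hsa (h1.trans h2.symm) (h1 ▸ hra)
  have ht_to_s : IsAlgebraic ℚ t → IsAlgebraic ℚ s := fun hta =>
    hS.isAlgebraic_of_rpow_eq_rpow ht hs ht1 hta (h2.trans h1.symm) (h2 ▸ hra)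
  suffices ¬ (IsAlgebraic ℚ s ∧ IsAlgebraic ℚ t) from
    ⟨fun hsa => this ⟨hsa, hs_to_t hsa⟩, fun hta => this ⟨ht_to_s hta, hta⟩⟩
  rintro ⟨hsa, hta⟩
  obtain ⟨q, rfl⟩ := hS.exists_rat_eq_of_isAlgebraic_rpow hs hs1 hsa hta (h1 ▸ hra)
  obtain ⟨p, rfl⟩ := hS.exists_rat_eq_of_isAlgebraic_rpow ht ht1 hta hsa (h2 ▸ hra)
  exact hr16 (eq_sixteen_of_rat_rpow_eq_rpow (by exact_mod_cast hs) (by exact_mod_cast hst) h1 h2)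

/-- Assuming Schanuel's conjecture, if `r ∈ ℕ`, `r > e^e`, `r ≠ 16`, and
`0 < s < t` with `s^t = t^s = r`, then `s` and `t` are both transcendental. -/
theorem both_transcendental (hS : SchanuelConjecture)
    (r : ℕ) (hr : exp 1 ^ exp 1 < (r : ℝ)) (hr16 : r ≠ 16)
    (s t : ℝ) (hs : 0 < s) (hst : s < t)
    (h1 : s ^ t = (r : ℝ)) (h2 : t ^ s = (r : ℝ)) :
    Transcendental ℚ s ∧ Transcendental ℚ t :=
  both_transcendental_general hS r hr16 s t hs hst h1 h2
end

section
/- Assume Schanuel's conjecture. Then √2^(√2^√2) is transcendental. -/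
open Set Algebra

theorem isAlgebraic_adjoin_of_mem {R A : Type*} [CommRing R] [CommRing A] [Nontrivial A]
    [Algebra R A] {t : Set A} {x : A} (hx : x ∈ t) : IsAlgebraic (adjoin R t) x :=
  isAlgebraic_algebraMap (⟨x, subset_adjoin hx⟩ : adjoin R t)

theorem IsAlgebraic.tower_top_adjoin {K A : Type*} [Field K] [CommRing A] [Nontrivial A]
    [Algebra K A] (t : Set A) {x : A} (hx : IsAlgebraic K x) : IsAlgebraic (adjoin K t) x :=
  hx.extendScalars (algebraMap K _).injective

theorem AlgebraicIndepOn.encard_le_of_isAlgebraic {R A : Type*} [CommRing R] [CommRing A]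
    [IsDomain A] [Algebra R A] {s t : Set A} (hs : AlgebraicIndepOn R id s)
    (hst : ∀ a ∈ s, IsAlgebraic (adjoin R t) a) : s.encard ≤ t.encard := by
  have := (faithfulSMul_iff_algebraMap_injective R A).mpr hs.algebraMap_injective
  let M := AlgebraicIndependent.matroid R A
  have hcl : s ⊆ M.closure t := by
    rw [AlgebraicIndependent.matroid_closure_eq]
    exact hst
  calc s.encard ≤ M.eRk (M.closure t) :=
        (AlgebraicIndependent.matroid_indep_iff.mpr hs).encard_le_eRk_of_subset hcl
    _ = M.eRk t := M.eRk_closure_eq t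
    _ ≤ t.encard := M.eRk_le_encard t

theorem AlgebraicIndependent.card_le_encard_of_isAlgebraic {ι R A : Type*} [CommRing R]
    [Nontrivial R] [CommRing A] [IsDomain A] [Algebra R A] {x : ι → A}
    (hx : AlgebraicIndependent R x) {t : Set A} (hxt : ∀ i, IsAlgebraic (adjoin R t) (x i)) :
    ENat.card ι ≤ t.encard :=
  hx.injective.encard_range.trans <|
    AlgebraicIndepOn.encard_le_of_isAlgebraic hx.to_subtype_range (forall_mem_range.mpr hxt)

theorem LinearIndependent.finCons_of_transcendental {K A : Type*} [Field K] [CommRing A]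
    [Algebra K A] {n : ℕ} {v : Fin n → A} (hv : LinearIndependent K v)
    (hv_alg : ∀ i, IsAlgebraic K (v i)) {x : A} (hx : Transcendental K x) :
    LinearIndependent K (Fin.cons x v : Fin (n + 1) → A) := by
  refine linearIndependent_finCons.mpr ⟨hv, fun hmem ↦ hx ?_⟩
  have hspan : Submodule.span K (range v) ≤
      Subalgebra.toSubmodule (Subalgebra.algebraicClosure K A) :=
    Submodule.span_le.mpr (range_subset_iff.mpr hv_alg)
  exact hspan hmem

theorem linearIndependent_one_of_irrational {x : ℝ} (hx : Irrational x) :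
    LinearIndependent ℚ ![1, x] :=
  (LinearIndependent.pair_iff' one_ne_zero).mpr fun q ↦ by
    simpa [Rat.smul_def] using (hx.ne_rat q).symm

theorem isAlgebraic_sqrt_two : IsAlgebraic ℚ (Real.sqrt 2) :=
  .of_pow two_pos (by rw [Real.sq_sqrt zero_le_two]; exact isAlgebraic_algebraMap (2 : ℚ))

namespace SchanuelConjecture

variable (hS : SchanuelConjecture)
include hS

theorem le_encard_of_isAlgebraic {n : ℕ} {α : Fin n → ℂ} (hα : LinearIndependent ℚ α)
    {t : Set ℂ} (hαt : ∀ i, IsAlgebraic (adjoin ℚ t) (α i))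
    (hexpt : ∀ i, IsAlgebraic (adjoin ℚ t) (Complex.exp (α i))) : (n : ℕ∞) ≤ t.encard := by
  obtain ⟨g, hg, hind⟩ := hS n α hα
  simpa using hind.card_le_encard_of_isAlgebraic fun i ↦ by
    rcases hg i with ⟨j, hj⟩ | ⟨j, hj⟩ <;> rw [← hj]
    exacts [hαt j, hexpt j]

theorem le_encard_of_rpow {a : ℝ} (ha₀ : 0 < a) (ha₁ : a ≠ 1) {n : ℕ} {c : Fin n → ℝ}
    (hc : LinearIndependent ℚ c) {t : Set ℂ}
    (hct : ∀ i, IsAlgebraic (adjoin ℚ t) ((c i * Real.log a : ℝ) : ℂ))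
    (hpowt : ∀ i, IsAlgebraic (adjoin ℚ t) ((a ^ c i : ℝ) : ℂ)) : (n : ℕ∞) ≤ t.encard := by
  have hlog : Real.log a ≠ 0 := Real.log_ne_zero_of_pos_of_ne_one ha₀ ha₁
  let f : ℝ →ₗ[ℚ] ℂ :=
    (Complex.ofRealAm.toLinearMap.restrictScalars ℚ) ∘ₗ LinearMap.mulRight ℚ (Real.log a)
  have hf : LinearMap.ker f = ⊥ :=
    LinearMap.ker_eq_bot.mpr (Complex.ofReal_injective.comp (mul_left_injective₀ hlog))
  refine hS.le_encard_of_isAlgebraic (hc.map' f hf) hct fun i ↦ ?_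
  convert hpowt i using 2
  simp [f, Real.rpow_def_of_pos ha₀, mul_comm]

variable {a β : ℝ} (ha₀ : 0 < a) (ha₁ : a ≠ 1) (ha : IsAlgebraic ℚ a) (hβ : IsAlgebraic ℚ β)
  (hβ' : Irrational β)
include ha₀ ha₁ ha hβ hβ'

theorem transcendental_rpow : Transcendental ℚ (a ^ β) := by
  intro hpow
  set t : Set ℂ := {(Real.log a : ℂ)}
  have hℓ : IsAlgebraic (adjoin ℚ t) (Real.log a : ℂ) := isAlgebraic_adjoin_of_mem rfl
  have hβℓ : IsAlgebraic (adjoin ℚ t) ((β * Real.log a : ℝ) : ℂ) := by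
    simpa using ((hβ.algebraMap (A := ℂ)).tower_top_adjoin t).mul hℓ
  have h := hS.le_encard_of_rpow ha₀ ha₁ (linearIndependent_one_of_irrational hβ') (t := t)
    (Fin.forall_fin_two.mpr ⟨by simpa using hℓ, hβℓ⟩)
    (Fin.forall_fin_two.mpr ⟨by simpa using (ha.algebraMap (A := ℂ)).tower_top_adjoin t,
      (hpow.algebraMap (A := ℂ)).tower_top_adjoin t⟩)
  simp [t] at h

theorem transcendental_rpow_rpow : Transcendental ℚ (a ^ a ^ β) := by
  intro hpow
  set t : Set ℂ := {(Real.log a : ℂ), ((a ^ β : ℝ) : ℂ)}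
  have hℓ : IsAlgebraic (adjoin ℚ t) (Real.log a : ℂ) := isAlgebraic_adjoin_of_mem (by simp [t])
  have hγ : IsAlgebraic (adjoin ℚ t) ((a ^ β : ℝ) : ℂ) := isAlgebraic_adjoin_of_mem (by simp [t])
  have hβℓ : IsAlgebraic (adjoin ℚ t) ((β * Real.log a : ℝ) : ℂ) := by
    simpa using ((hβ.algebraMap (A := ℂ)).tower_top_adjoin t).mul hℓ
  have hc : LinearIndependent ℚ ![a ^ β, 1, β] :=
    (linearIndependent_one_of_irrational hβ').finCons_of_transcendental
      (Fin.forall_fin_two.mpr ⟨isAlgebraic_one, hβ⟩) (hS.transcendental_rpow ha₀ ha₁ ha hβ hβ')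
  have h := hS.le_encard_of_rpow ha₀ ha₁ hc (t := t)
    (Fin.forall_fin_succ.mpr
      ⟨by simpa using hγ.mul hℓ, Fin.forall_fin_two.mpr ⟨by simpa using hℓ, hβℓ⟩⟩)
    (Fin.forall_fin_succ.mpr ⟨(hpow.algebraMap (A := ℂ)).tower_top_adjoin t,
      Fin.forall_fin_two.mpr ⟨by simpa using (ha.algebraMap (A := ℂ)).tower_top_adjoin t, hγ⟩⟩)
  have ht : t.encard ≤ 2 := (encard_insert_le _ _).trans (by rw [encard_singleton]; rfl)
  exact absurd (h.trans ht) (by decide)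

end SchanuelConjecture

/-- Assuming Schanuel's conjecture, `√2 ^ (√2 ^ √2)` is transcendental. -/
theorem sqrt_two_tower_transcendental (hS : SchanuelConjecture) :
    Transcendental ℚ (Real.sqrt 2 ^ (Real.sqrt 2 ^ Real.sqrt 2)) :=
  hS.transcendental_rpow_rpow (by positivity) (by norm_num) isAlgebraic_sqrt_two
    isAlgebraic_sqrt_two irrational_sqrt_two
end
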